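/- arXiv:1012.0197 — 7 statements merged into one kernel-verified Lean document; each statement's English description precedes it below -/
import Mathlib

section
/- Let M be a nonnegative m-by-n matrix and W a nonnegative m-by-n weight matrix. For any vectors u ∈ ℝ^m and v ∈ ℝ^n, replacing u and v by their component-wise absolute values does not increase the weighted approximation error: ‖M − |u||v|^T‖_W ≤ ‖M − uv^T‖_W, where |u| denotes the vector of absolute values of entries of u. -/
theorem sq_sub_abs_le_sq_sub {α : Type*} [Ring α] [LinearOrder α] [IsStrictOrderedRing α]
    {a : α} (ha : 0 ≤ a) (x : α) : (a - |x|) ^ 2 ≤ (a - x) ^ 2 := by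
  refine sq_le_sq.2 ?_
  simpa only [abs_of_nonneg ha] using abs_abs_sub_abs_le_abs_sub a x

theorem stmt_2 {m n : ℕ} (M W : Matrix (Fin m) (Fin n) ℝ)
    (hM : ∀ i j, 0 ≤ M i j) (hW : ∀ i j, 0 ≤ W i j) (u : Fin m → ℝ) (v : Fin n → ℝ) :
    Real.sqrt (∑ i, ∑ j, W i j * (M i j - |u i| * |v j|) ^ 2) ≤
      Real.sqrt (∑ i, ∑ j, W i j * (M i j - u i * v j) ^ 2) := by
  refine Real.sqrt_le_sqrt <| Finset.sum_le_sum fun i _ => Finset.sum_le_sum fun j _ => ?_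
  rw [← abs_mul]
  exact mul_le_mul_of_nonneg_left (sq_sub_abs_le_sq_sub (hM i j) _) (hW i j)
end

section
/- Suppose the weight matrix W has rank one, i.e., W = s t^T for nonnegative vectors s ∈ ℝ^m and t ∈ ℝ^n. Then for any matrices M ∈ ℝ^{m×n}, U ∈ ℝ^{m×r}, V ∈ ℝ^{n×r}, one has ‖M − UV^T‖_W² = ‖M' − U'V'^T‖_F², where M'_{ij} = √(s_i t_j) M_{ij}, U'_{i:} = √(s_i) U_{i:}, and V'_{j:} = √(t_j) V_{j:}. -/
open Finset

theorem sum_mul_mul_mul_sum_mul {ι : Type*} [Fintype ι] (a b : ℝ) (u v : ι → ℝ) :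
    ∑ k, (a * u k) * (b * v k) = a * b * ∑ k, u k * v k := by
  rw [mul_sum]
  exact sum_congr rfl fun k _ => by ring

theorem mul_mul_sub_sum_sq_eq_sqrt {ι : Type*} [Fintype ι] {a b : ℝ} (ha : 0 ≤ a) (hb : 0 ≤ b)
    (x : ℝ) (u v : ι → ℝ) :
    a * b * (x - ∑ k, u k * v k) ^ 2 =
      (√(a * b) * x - ∑ k, (√a * u k) * (√b * v k)) ^ 2 := by
  rw [sum_mul_mul_mul_sum_mul, Real.sqrt_mul ha, ← mul_sub, mul_pow, mul_pow,
    Real.sq_sqrt ha, Real.sq_sqrt hb]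

theorem stmt_3 {m n r : ℕ} (s : Fin m → ℝ) (t : Fin n → ℝ)
    (hs : ∀ i, 0 ≤ s i) (ht : ∀ j, 0 ≤ t j)
    (W : Matrix (Fin m) (Fin n) ℝ) (hW : ∀ i j, W i j = s i * t j)
    (M : Matrix (Fin m) (Fin n) ℝ) (U : Matrix (Fin m) (Fin r) ℝ) (V : Matrix (Fin n) (Fin r) ℝ) :
    (∑ i, ∑ j, W i j * (M i j - ∑ k, U i k * V j k) ^ 2) =
      ∑ i, ∑ j,
        ((Real.sqrt (s i * t j) * M i j) -
          ∑ k, (Real.sqrt (s i) * U i k) * (Real.sqrt (t j) * V j k)) ^ 2 := by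
  simp_rw [hW]
  exact sum_congr rfl fun i _ => sum_congr rfl fun j _ =>
    mul_mul_sub_sum_sq_eq_sqrt (hs i) (ht j) (M i j) (U i) (V j)
end

section
/- Let M = [[1, a], [0, 1]] (for any real a) and let the weight matrix be W = [[1, 0], [1, 1]] (zero weight on the (1,2) entry, unit weights elsewhere). Then the infimum over u ∈ ℝ², v ∈ ℝ² of ‖M − uv^T‖_W² equals 0, but there is no pair (u,v) attaining it: every rank-one matrix uv^T satisfies ‖M − uv^T‖_W > 0. -/
/-!
The weight hides the entry `a`, so the error of `u vᵀ` is
`(1 - u₀v₀)² + (u₁v₀)² + (1 - u₁v₁)²`. It vanishes only if the observed entries `1, 0, 1` form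
the diagonal and lower-left entry of a rank-one matrix, which is impossible since
`(u₀v₀)(u₁v₁) = (u₁v₀)(u₀v₁)`. Yet `u = (1, ε)`, `v = (1, 1/ε)` fits the diagonal exactly and
leaves error `ε²` in the lower-left entry, so the infimum is `0`.
-/

/-- Weighted squared error for rank-one approximation of a 2×2 matrix. -/
noncomputable def wsq4 (M W : Matrix (Fin 2) (Fin 2) ℝ) (u v : Fin 2 → ℝ) : ℝ :=
  ∑ i, ∑ j, W i j * (M i j - u i * v j) ^ 2

lemma wsq4_unitUpper_lowerMask (a : ℝ) (u v : Fin 2 → ℝ) :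
    wsq4 !![1, a; 0, 1] !![1, 0; 1, 1] u v =
      (1 - u 0 * v 0) ^ 2 + (u 1 * v 0) ^ 2 + (1 - u 1 * v 1) ^ 2 := by
  simp only [wsq4, Fin.sum_univ_two, Matrix.of_apply, Matrix.cons_val', Matrix.cons_val_zero,
    Matrix.cons_val_one, Matrix.empty_val', Matrix.cons_val_fin_one]
  ring

lemma rankOne_lowerTriangle_error_pos (u₀ u₁ v₀ v₁ : ℝ) :
    0 < (1 - u₀ * v₀) ^ 2 + (u₁ * v₀) ^ 2 + (1 - u₁ * v₁) ^ 2 := by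
  by_contra! h
  have h₀ : u₀ * v₀ = 1 := by
    nlinarith [sq_nonneg (1 - u₀ * v₀), sq_nonneg (u₁ * v₀), sq_nonneg (1 - u₁ * v₁)]
  have h₁ : u₁ * v₀ = 0 := by
    nlinarith [sq_nonneg (1 - u₀ * v₀), sq_nonneg (u₁ * v₀), sq_nonneg (1 - u₁ * v₁)]
  have h₂ : u₁ * v₁ = 1 := by
    nlinarith [sq_nonneg (1 - u₀ * v₀), sq_nonneg (u₁ * v₀), sq_nonneg (1 - u₁ * v₁)]
  have hdet : (u₀ * v₀) * (u₁ * v₁) = (u₁ * v₀) * (u₀ * v₁) := by ring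
  rw [h₀, h₁, h₂] at hdet
  norm_num at hdet

lemma wsq4_unitUpper_lowerMask_witness (a : ℝ) {ε : ℝ} (hε : ε ≠ 0) :
    wsq4 !![1, a; 0, 1] !![1, 0; 1, 1] ![1, ε] ![1, 1 / ε] = ε ^ 2 := by
  rw [wsq4_unitUpper_lowerMask]
  simp [hε]

theorem stmt_4 (a : ℝ) (M W : Matrix (Fin 2) (Fin 2) ℝ)
    (hM : M = !![1, a; 0, 1]) (hW : W = !![1, 0; 1, 1]) :
    sInf {e : ℝ | ∃ u v : Fin 2 → ℝ, e = wsq4 M W u v} = 0 ∧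
    ∀ u v : Fin 2 → ℝ, 0 < wsq4 M W u v := by
  subst hM hW
  have hpos : ∀ u v : Fin 2 → ℝ, 0 < wsq4 !![1, a; 0, 1] !![1, 0; 1, 1] u v := fun u v => by
    rw [wsq4_unitUpper_lowerMask]
    exact rankOne_lowerTriangle_error_pos _ _ _ _
  refine ⟨csInf_eq_of_forall_ge_of_forall_gt_exists_lt ⟨_, 0, 0, rfl⟩ ?_ ?_, hpos⟩
  · rintro _ ⟨u, v, rfl⟩
    exact (hpos u v).le
  · intro w hw
    have hε : √w / 2 ≠ 0 := by positivity
    refine ⟨_, ⟨_, _, (wsq4_unitUpper_lowerMask_witness a hε).symm⟩, ?_⟩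
    rw [div_pow, Real.sq_sqrt hw.le]
    linarith
end

section
/- Let M ∈ {0,1}^{m×n} with |E| = Σ_{i,j} M_{ij} nonzero entries, and let W_{ij} = 1 if M_{ij} = 1 and W_{ij} = d ≥ 1 if M_{ij} = 0. Suppose (i,j) is such that M_{ij} = 0 and (u,v) ∈ ℝ^m × ℝ^n satisfies ‖M − uv^T‖_W² ≤ |E|. Then min( max_{1≤k≤n} |u_i v_k|, max_{1≤p≤m} |u_p v_j| ) ≤ (4|E|²/d)^{1/4}. -/
/-!
Every term of the weighted error is at most `E`. At the entry `(i, j)` the weight is `d`, so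
`(u i * v j) ^ 2 ≤ E / d`, while every entry satisfies `(u p * v k) ^ 2 ≤ 4 * E` (using `E ≥ 1`
as soon as `M` has a one). If the row maximum is attained at `k` and the column maximum at `p`,
the rank-one structure gives `|u i * v k| * |u p * v j| = |u i * v j| * |u p * v k|`, so the
product of the two maxima is at most `√(E / d) * 2 √E`, and their minimum at most the square
root of that.
-/

open Finset

theorem single_le_sum_sum {ι κ α : Type*} [Fintype ι] [Fintype κ] [AddCommMonoid α]
    [PartialOrder α] [IsOrderedAddMonoid α] {f : ι → κ → α}
    (hf : ∀ p k, 0 ≤ f p k) (p : ι) (k : κ) : f p k ≤ ∑ p', ∑ k', f p' k' :=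
  (single_le_sum (fun k' _ => hf p k') (mem_univ k)).trans
    (single_le_sum (fun p' _ => sum_nonneg fun k' _ => hf p' k') (mem_univ p))

theorem sq_le_four_mul_of_one_sub_sq_le {x E : ℝ} (hE : 1 ≤ E) (h : (1 - x) ^ 2 ≤ E) :
    x ^ 2 ≤ 4 * E := by
  have hx : |1 - x| ≤ Real.sqrt E := Real.abs_le_sqrt h
  have hsE : Real.sqrt E ≤ E := by
    rw [Real.sqrt_le_left (by linarith)]; nlinarith
  nlinarith [abs_le.mp hx, Real.sq_sqrt (by linarith : 0 ≤ E), Real.sqrt_nonneg E]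

theorem exists_iSup_abs_mul_iSup_abs_le {ι κ : Type*} [Finite ι] [Finite κ]
    (u : ι → ℝ) (v : κ → ℝ) (i : ι) (j : κ) :
    ∃ p k, (⨆ k, |u i * v k|) * (⨆ p, |u p * v j|) ≤ |u i * v j| * |u p * v k| := by
  have : Nonempty ι := ⟨i⟩
  have : Nonempty κ := ⟨j⟩
  obtain ⟨k, hk⟩ := Finite.exists_max fun k => |u i * v k|
  obtain ⟨p, hp⟩ := Finite.exists_max fun p => |u p * v j|
  refine ⟨p, k, ?_⟩
  calc (⨆ k, |u i * v k|) * (⨆ p, |u p * v j|) ≤ |u i * v k| * |u p * v j| :=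
        mul_le_mul (ciSup_le hk) (ciSup_le hp) (Real.iSup_nonneg fun _ => abs_nonneg _)
          (abs_nonneg _)
    _ = |u i * v j| * |u p * v k| := by rw [← abs_mul, ← abs_mul]; ring_nf

theorem min_le_rpow_quarter_of_sq_mul_le {a b c : ℝ} (ha : 0 ≤ a) (hb : 0 ≤ b)
    (h : (a * b) ^ 2 ≤ c) : min a b ≤ c ^ ((1 : ℝ) / 4) := by
  have hmin : 0 ≤ min a b := le_min ha hb
  have hsq : min a b ^ 2 ≤ a * b := by
    rw [sq]; exact mul_le_mul (min_le_left a b) (min_le_right a b) hmin ha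
  have h4 : min a b ^ (4 : ℝ) ≤ c := by
    rw [show (4 : ℝ) = (2 * 2 : ℕ) by norm_num, Real.rpow_natCast, pow_mul]
    exact (pow_le_pow_left₀ (sq_nonneg _) hsq 2).trans h
  rwa [one_div, Real.le_rpow_inv_iff_of_pos hmin ((sq_nonneg _).trans h) (by norm_num)]

theorem stmt_6 {m n : ℕ} (M W : Matrix (Fin m) (Fin n) ℝ) (d : ℝ) (hd : 1 ≤ d)
    (hM : ∀ i j, M i j = 0 ∨ M i j = 1)
    (hW : ∀ i j, W i j = if M i j = 1 then 1 else d)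
    (E : ℝ) (hE : E = ∑ i, ∑ j, M i j)
    (i : Fin m) (j : Fin n) (hij : M i j = 0)
    (u : Fin m → ℝ) (v : Fin n → ℝ)
    (herr : ∑ i', ∑ j', W i' j' * (M i' j' - u i' * v j') ^ 2 ≤ E) :
    min (⨆ k : Fin n, |u i * v k|) (⨆ p : Fin m, |u p * v j|) ≤
      (4 * E ^ 2 / d) ^ ((1 : ℝ) / 4) := by
  have hd0 : 0 < d := one_pos.trans_le hd
  have hterm (p k) : W p k * (M p k - u p * v k) ^ 2 ≤ E :=
    (single_le_sum_sum (f := fun p k => W p k * (M p k - u p * v k) ^ 2)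
      (fun p k => mul_nonneg (by rw [hW]; split_ifs <;> linarith) (sq_nonneg _)) p k).trans herr
  have hcorner : d * (u i * v j) ^ 2 ≤ E := by simpa [hW, hij] using hterm i j
  have hentry (p k) : (u p * v k) ^ 2 ≤ 4 * E := by
    rcases hM p k with h | h
    · have : d * (u p * v k) ^ 2 ≤ E := by simpa [hW, h] using hterm p k
      nlinarith [sq_nonneg (u p * v k)]
    · have hE1 : 1 ≤ E := hE ▸ h ▸ single_le_sum_sum (fun p k => by
        rcases hM p k with h | h <;> simp [h]) p k
      exact sq_le_four_mul_of_one_sub_sq_le hE1 (by simpa [hW, h] using hterm p k)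
  obtain ⟨p, k, hpk⟩ := exists_iSup_abs_mul_iSup_abs_le u v i j
  have hrow : 0 ≤ ⨆ k, |u i * v k| := Real.iSup_nonneg fun _ => abs_nonneg _
  have hcol : 0 ≤ ⨆ p, |u p * v j| := Real.iSup_nonneg fun _ => abs_nonneg _
  refine min_le_rpow_quarter_of_sq_mul_le hrow hcol ?_
  calc _ ≤ (|u i * v j| * |u p * v k|) ^ 2 := pow_le_pow_left₀ (mul_nonneg hrow hcol) hpk 2
    _ = (u i * v j) ^ 2 * (u p * v k) ^ 2 := by rw [mul_pow, sq_abs, sq_abs]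
    _ ≤ E / d * (4 * E) := mul_le_mul ((le_div_iff₀' hd0).2 hcorner) (hentry p k)
        (sq_nonneg _) (div_nonneg ((mul_nonneg hd0.le (sq_nonneg _)).trans hcorner) hd0.le)
    _ = 4 * E ^ 2 / d := by ring
end

section
/- Let M ∈ {0,1}^{m×n} be the biadjacency matrix of a bipartite graph G_b, let W ∈ ℝ₊^{m×n} satisfy W_{ij} = 1 whenever M_{ij} = 1, and let 0 < c ≤ 1. Suppose (u,v) ∈ ℝ^m × ℝ^n is such that for every (i,j) with M_{ij} = 0, min( max_k |u_i v_k|, max_p |u_p v_j| ) ≤ c. Let p = |E| − |E*| > 0, where |E| is the number of ones in M and |E*| is the maximum number of entries (i,j) in a combinatorial rectangle I × J ⊆ {1,…,m} × {1,…,n} with M_{ij} = 1 for all (i,j) ∈ I × J (maximum-edge biclique). Then ‖M − uv^T‖_W² > p(1 − 2c). -/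
/-- (I, J) is a biclique of the bipartite graph whose biadjacency matrix is M. -/
def IsBiclique {m n : ℕ} (M : Matrix (Fin m) (Fin n) ℝ)
    (I : Finset (Fin m)) (J : Finset (Fin n)) : Prop :=
  ∀ i ∈ I, ∀ j ∈ J, M i j = 1

/-!
Let `Ω = I × J`, where `I` (resp. `J`) consists of the rows (resp. columns) of `u vᵀ` having an
entry of size `> c`. The hypothesis on the zeros of `M` says exactly that `Ω` contains no
zero of `M`, so `Ω` is a biclique and at least `|E| - |E*| = p` ones of `M` lie outside `Ω`. There
`|u_i v_j| ≤ c` and `W_ij = 1`, so each of them costs at least `(1 - c)² > 1 - 2c` in the weighted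
error.
-/

open Finset

section

variable {ι κ : Type*} [Fintype ι] [Fintype κ]

/-- `largeRows u v c ×ˢ largeCols u v c` is the rectangle `Ω_c(u, v)`. -/
noncomputable def largeRows (u : ι → ℝ) (v : κ → ℝ) (c : ℝ) : Finset ι :=
  {i | ∃ j, c < |u i * v j|}

noncomputable def largeCols (u : ι → ℝ) (v : κ → ℝ) (c : ℝ) : Finset κ :=
  {j | ∃ i, c < |u i * v j|}

lemma mem_largeRows {u : ι → ℝ} {v : κ → ℝ} {c : ℝ} {i : ι} :
    i ∈ largeRows u v c ↔ ∃ j, c < |u i * v j| := by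
  simp [largeRows]

lemma mem_largeCols {u : ι → ℝ} {v : κ → ℝ} {c : ℝ} {j : κ} :
    j ∈ largeCols u v c ↔ ∃ i, c < |u i * v j| := by
  simp [largeCols]

lemma abs_mul_le_of_notMem_largeRows_product_largeCols {u : ι → ℝ} {v : κ → ℝ} {c : ℝ}
    {q : ι × κ} (hq : q ∉ largeRows u v c ×ˢ largeCols u v c) : |u q.1 * v q.2| ≤ c := by
  simp only [mem_product, mem_largeRows, mem_largeCols, not_and_or, not_exists, not_lt] at hq
  exact hq.elim (· q.2) (· q.1)

lemma sum_sum_eq_card_filter_eq_one (M : ι → κ → ℝ) (hM : ∀ i j, M i j = 0 ∨ M i j = 1) :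
    ∑ i, ∑ j, M i j = #{q : ι × κ | M q.1 q.2 = 1} := by
  rw [← Fintype.sum_prod_type', natCast_card_filter]
  refine sum_congr rfl fun q _ => ?_
  rcases hM q.1 q.2 with h | h <;> simp [h]

lemma card_mul_sq_le_sum_weighted_sq_sub {M W : ι → κ → ℝ} {u : ι → ℝ} {v : κ → ℝ} {c : ℝ}
    (hWpos : ∀ i j, 0 ≤ W i j) (hW1 : ∀ i j, M i j = 1 → W i j = 1) (hc1 : c ≤ 1)
    (S : Finset (ι × κ)) (hS : ∀ q ∈ S, M q.1 q.2 = 1 ∧ |u q.1 * v q.2| ≤ c) :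
    #S * (1 - c) ^ 2 ≤ ∑ i, ∑ j, W i j * (M i j - u i * v j) ^ 2 := by
  have hentry : ∀ q ∈ S, (1 - c) ^ 2 ≤ W q.1 q.2 * (M q.1 q.2 - u q.1 * v q.2) ^ 2 := by
    intro q hq
    obtain ⟨hM1, huv⟩ := hS q hq
    rw [hW1 _ _ hM1, hM1, one_mul]
    have := (abs_le.mp huv).2
    exact pow_le_pow_left₀ (by linarith) (by linarith) 2
  rw [← Fintype.sum_prod_type']
  calc (#S : ℝ) * (1 - c) ^ 2 = ∑ _q ∈ S, (1 - c) ^ 2 := by rw [sum_const, nsmul_eq_mul]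
    _ ≤ ∑ q ∈ S, W q.1 q.2 * (M q.1 q.2 - u q.1 * v q.2) ^ 2 := sum_le_sum hentry
    _ ≤ ∑ q : ι × κ, W q.1 q.2 * (M q.1 q.2 - u q.1 * v q.2) ^ 2 :=
      sum_le_univ_sum_of_nonneg fun q => mul_nonneg (hWpos _ _) (sq_nonneg _)

end

lemma isBiclique_largeRows_largeCols {m n : ℕ} {M : Matrix (Fin m) (Fin n) ℝ}
    {u : Fin m → ℝ} {v : Fin n → ℝ} {c : ℝ} (hM : ∀ i j, M i j = 0 ∨ M i j = 1)
    (hsmall : ∀ i j, M i j = 0 →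
      min (⨆ k : Fin n, |u i * v k|) (⨆ q : Fin m, |u q * v j|) ≤ c) :
    IsBiclique M (largeRows u v c) (largeCols u v c) := by
  intro i hi j hj
  refine (hM i j).resolve_left fun h0 => (hsmall i j h0).not_gt (lt_min ?_ ?_)
  · obtain ⟨k, hk⟩ := mem_largeRows.mp hi
    exact hk.trans_le (le_ciSup (Finite.bddAbove_range fun k => |u i * v k|) k)
  · obtain ⟨q, hq⟩ := mem_largeCols.mp hj
    exact hq.trans_le (le_ciSup (Finite.bddAbove_range fun q => |u q * v j|) q)

theorem stmt_7_general {m n : ℕ} (M W : Matrix (Fin m) (Fin n) ℝ)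
    (hM : ∀ i j, M i j = 0 ∨ M i j = 1)
    (hWpos : ∀ i j, 0 ≤ W i j) (hW1 : ∀ i j, M i j = 1 → W i j = 1)
    (c : ℝ) (hc0 : 0 < c) (hc1 : c ≤ 1)
    (E : ℝ) (hE : E = ∑ i, ∑ j, M i j)
    (Estar : ℕ)
    (hEstar_max : ∀ (I : Finset (Fin m)) (J : Finset (Fin n)),
      IsBiclique M I J → I.card * J.card ≤ Estar)
    (p : ℝ) (hp : p = E - Estar) (hppos : 0 < p)
    (u : Fin m → ℝ) (v : Fin n → ℝ)
    (hsmall : ∀ i j, M i j = 0 →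
      min (⨆ k : Fin n, |u i * v k|) (⨆ q : Fin m, |u q * v j|) ≤ c) :
    p * (1 - 2 * c) < ∑ i, ∑ j, W i j * (M i j - u i * v j) ^ 2 := by
  set Ω := largeRows u v c ×ˢ largeCols u v c
  set ones : Finset (Fin m × Fin n) := {q | M q.1 q.2 = 1}
  have hΩ : #Ω ≤ Estar := by
    rw [card_product]
    exact hEstar_max _ _ (isBiclique_largeRows_largeCols hM hsmall)
  have hp_le : p ≤ #(ones \ Ω) := by
    have hones : #ones ≤ #(ones \ Ω) + Estar :=
      (card_le_card_sdiff_add_card (t := Ω)).trans (by omega)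
    rw [hp, hE, sum_sum_eq_card_filter_eq_one M hM, sub_le_iff_le_add]
    exact_mod_cast hones
  have herr := card_mul_sq_le_sum_weighted_sq_sub hWpos hW1 hc1 (ones \ Ω) fun q hq =>
    ⟨(mem_filter.mp (mem_sdiff.mp hq).1).2,
      abs_mul_le_of_notMem_largeRows_product_largeCols (mem_sdiff.mp hq).2⟩
  calc p * (1 - 2 * c) < p * (1 - c) ^ 2 := by nlinarith [mul_pos hppos (mul_pos hc0 hc0)]
    _ ≤ #(ones \ Ω) * (1 - c) ^ 2 := by gcongr
    _ ≤ _ := herr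

theorem stmt_7 {m n : ℕ} (M W : Matrix (Fin m) (Fin n) ℝ)
    (hM : ∀ i j, M i j = 0 ∨ M i j = 1)
    (hWpos : ∀ i j, 0 ≤ W i j) (hW1 : ∀ i j, M i j = 1 → W i j = 1)
    (c : ℝ) (hc0 : 0 < c) (hc1 : c ≤ 1)
    (E : ℝ) (hE : E = ∑ i, ∑ j, M i j)
    (Estar : ℕ)
    (hEstar_ex : ∃ (I : Finset (Fin m)) (J : Finset (Fin n)),
      IsBiclique M I J ∧ I.card * J.card = Estar)
    (hEstar_max : ∀ (I : Finset (Fin m)) (J : Finset (Fin n)),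
      IsBiclique M I J → I.card * J.card ≤ Estar)
    (p : ℝ) (hp : p = E - Estar) (hppos : 0 < p)
    (u : Fin m → ℝ) (v : Fin n → ℝ)
    (hsmall : ∀ i j, M i j = 0 →
      min (⨆ k : Fin n, |u i * v k|) (⨆ q : Fin m, |u q * v j|) ≤ c) :
    p * (1 - 2 * c) < ∑ i, ∑ j, W i j * (M i j - u i * v j) ^ 2 :=
  stmt_7_general M W hM hWpos hW1 c hc0 hc1 E hE Estar hEstar_max p hp hppos u v hsmall
end

section
/- Let M ∈ {0,1}^{m×n} be a biadjacency matrix with |E| ≥ 1 ones and maximum biclique size |E*|, and let W_{ij} = 1 if M_{ij} = 1 and W_{ij} = d if M_{ij} = 0. For any 0 < ε ≤ 1 and any d ≥ 2⁶|E|⁶/ε⁴, the optimal value p* = min_{u∈ℝ^m, v∈ℝ^n} ‖M − uv^T‖_W² satisfies |E| − |E*| − ε < p* ≤ |E| − |E*|. -/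
open Finset

section WeightedLoss

variable {ι κ : Type*}

lemma weight_nonneg {M W : Matrix ι κ ℝ} {d : ℝ}
    (hW : ∀ i j, W i j = if M i j = 1 then 1 else d) (hd : 0 ≤ d) (i : ι) (j : κ) :
    0 ≤ W i j := by
  rw [hW]
  split_ifs <;> linarith

variable [Fintype ι] [Fintype κ]

def weightedLoss (M W : Matrix ι κ ℝ) (u : ι → ℝ) (v : κ → ℝ) : ℝ :=
  ∑ i, ∑ j, W i j * (M i j - u i * v j) ^ 2

noncomputable def ones (M : Matrix ι κ ℝ) : Finset (ι × κ) :=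
  univ.filter fun p => M p.1 p.2 = 1

noncomputable def onesAbove (M : Matrix ι κ ℝ) (u : ι → ℝ) (v : κ → ℝ) (β : ℝ) :
    Finset (ι × κ) :=
  (ones M).filter fun p => β < u p.1 * v p.2

variable {M W : Matrix ι κ ℝ} {d : ℝ}

lemma sum_eq_card_ones (hM : ∀ i j, M i j = 0 ∨ M i j = 1) :
    ∑ i, ∑ j, M i j = #(ones M) := by
  rw [← Fintype.sum_prod_type' (fun i j => M i j), ones, card_filter]
  push_cast
  refine sum_congr rfl fun p _ => ?_
  rcases hM p.1 p.2 with h | h <;> simp [h]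

lemma sum_le_weightedLoss (hW : ∀ i j, 0 ≤ W i j) (u : ι → ℝ) (v : κ → ℝ)
    (s : Finset (ι × κ)) :
    ∑ p ∈ s, W p.1 p.2 * (M p.1 p.2 - u p.1 * v p.2) ^ 2 ≤ weightedLoss M W u v := by
  rw [weightedLoss, ← Fintype.sum_prod_type' fun i j => W i j * (M i j - u i * v j) ^ 2]
  exact sum_le_sum_of_subset_of_nonneg (subset_univ s)
    fun p _ _ => mul_nonneg (hW p.1 p.2) (sq_nonneg _)

lemma mul_sq_le_weightedLoss_of_eq_zero (hW : ∀ i j, W i j = if M i j = 1 then 1 else d)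
    (hd : 0 ≤ d) (u : ι → ℝ) (v : κ → ℝ) {i : ι} {j : κ} (hij : M i j = 0) :
    d * (u i * v j) ^ 2 ≤ weightedLoss M W u v :=
  calc d * (u i * v j) ^ 2
      = ∑ p ∈ {(i, j)}, W p.1 p.2 * (M p.1 p.2 - u p.1 * v p.2) ^ 2 := by simp [hW, hij]
    _ ≤ _ := sum_le_weightedLoss (weight_nonneg hW hd) u v _

lemma one_sub_sq_le_weightedLoss_of_eq_one (hW : ∀ i j, W i j = if M i j = 1 then 1 else d)
    (hd : 0 ≤ d) (u : ι → ℝ) (v : κ → ℝ) {i : ι} {j : κ} (hij : M i j = 1) :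
    (1 - u i * v j) ^ 2 ≤ weightedLoss M W u v :=
  calc (1 - u i * v j) ^ 2
      = ∑ p ∈ {(i, j)}, W p.1 p.2 * (M p.1 p.2 - u p.1 * v p.2) ^ 2 := by simp [hW, hij]
    _ ≤ _ := sum_le_weightedLoss (weight_nonneg hW hd) u v _

lemma sq_le_weightedLoss (hM : ∀ i j, M i j = 0 ∨ M i j = 1)
    (hW : ∀ i j, W i j = if M i j = 1 then 1 else d) (hd : 1 ≤ d)
    (u : ι → ℝ) (v : κ → ℝ) (i : ι) (j : κ) :
    (u i * v j) ^ 2 ≤ 2 * (1 + weightedLoss M W u v) := by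
  rcases hM i j with hij | hij
  · nlinarith [mul_sq_le_weightedLoss_of_eq_zero hW (by linarith) u v hij, sq_nonneg (u i * v j)]
  · nlinarith [one_sub_sq_le_weightedLoss_of_eq_one hW (by linarith) u v hij,
      sq_nonneg (u i * v j - 2)]

lemma one_sub_sq_mul_card_le_weightedLoss (hW : ∀ i j, W i j = if M i j = 1 then 1 else d)
    (hd : 0 ≤ d) (u : ι → ℝ) (v : κ → ℝ) {β : ℝ} (hβ : β ≤ 1) :
    (1 - β) ^ 2 * #((ones M).filter fun p => ¬ β < u p.1 * v p.2) ≤ weightedLoss M W u v := by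
  refine le_trans ?_ <| sum_le_weightedLoss (weight_nonneg hW hd) u v <|
    (ones M).filter fun p => ¬ β < u p.1 * v p.2
  rw [mul_comm, ← nsmul_eq_mul, ← sum_const]
  refine sum_le_sum fun p hp => ?_
  obtain ⟨hp1, hp⟩ := mem_filter.mp hp
  replace hp1 : M p.1 p.2 = 1 := (mem_filter.mp hp1).2
  rw [hW, if_pos hp1, hp1, one_mul]
  nlinarith [not_lt.mp hp]

end WeightedLoss

section Biclique

variable {m n : ℕ} {M W : Matrix (Fin m) (Fin n) ℝ} {d : ℝ}

lemma isBiclique_onesAbove (hM : ∀ i j, M i j = 0 ∨ M i j = 1)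
    (hW : ∀ i j, W i j = if M i j = 1 then 1 else d) (hd : 1 ≤ d) {E β : ℝ} (hE : 1 ≤ E)
    (hβ : 0 ≤ β) (hdβ : 4 * E ^ 2 ≤ d * β ^ 4) {u : Fin m → ℝ} {v : Fin n → ℝ}
    (hL : weightedLoss M W u v ≤ E) :
    IsBiclique M ((onesAbove M u v β).image Prod.fst) ((onesAbove M u v β).image Prod.snd) := by
  intro i hi j hj
  obtain ⟨⟨i, p⟩, hip, rfl⟩ := mem_image.mp hi
  obtain ⟨⟨q, j⟩, hqj, rfl⟩ := mem_image.mp hj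
  simp only [onesAbove, ones, mem_filter, mem_univ, true_and] at hip hqj
  refine (hM _ _).resolve_left fun hij => ?_
  have hzero := mul_sq_le_weightedLoss_of_eq_zero hW (by linarith) u v hij
  have hqp := sq_le_weightedLoss hM hW hd u v q p
  have hrect : β ^ 2 < (u i * v j) * (u q * v p) :=
    calc β ^ 2 = β * β := sq β
      _ < (u i * v p) * (u q * v j) := mul_lt_mul'' hip.2 hqj.2 hβ hβ
      _ = (u i * v j) * (u q * v p) := by ring
  have : d * β ^ 4 < 4 * E ^ 2 :=
    calc d * β ^ 4 = d * (β ^ 2) ^ 2 := by ring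
      _ < d * ((u i * v j) * (u q * v p)) ^ 2 := by gcongr
      _ = d * (u i * v j) ^ 2 * (u q * v p) ^ 2 := by ring
      _ ≤ E * (2 * (1 + E)) :=
        mul_le_mul (hzero.trans hL) (hqp.trans (by linarith)) (sq_nonneg _) (by linarith)
      _ ≤ 4 * E ^ 2 := by nlinarith
  linarith

lemma one_sub_sq_mul_le_weightedLoss (hM : ∀ i j, M i j = 0 ∨ M i j = 1)
    (hW : ∀ i j, W i j = if M i j = 1 then 1 else d) {E β : ℝ} {Estar : ℕ}
    (hE : E = ∑ i, ∑ j, M i j) (hE1 : 1 ≤ E)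
    (hmax : ∀ I J, IsBiclique M I J → #I * #J ≤ Estar)
    (hβ0 : 0 ≤ β) (hβ1 : β ≤ 1) (hdβ : 4 * E ^ 2 ≤ d * β ^ 4)
    (u : Fin m → ℝ) (v : Fin n → ℝ) :
    (1 - β) ^ 2 * (E - Estar) ≤ weightedLoss M W u v := by
  have hd : 1 ≤ d := by
    by_contra! hd
    nlinarith [pow_le_one₀ hβ0 hβ1 (n := 4),
      mul_nonneg (sub_nonneg.2 hd.le) (pow_nonneg hβ0 4)]
  have hsq : (1 - β) ^ 2 ≤ 1 := by nlinarith
  by_cases hL : weightedLoss M W u v ≤ E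
  swap
  · nlinarith [Nat.cast_nonneg (α := ℝ) Estar]
  let T := onesAbove M u v β
  have hT : #T ≤ Estar :=
    calc #T ≤ #(T.image Prod.fst ×ˢ T.image Prod.snd) :=
          card_le_card fun p hp =>
            mem_product.mpr ⟨mem_image_of_mem _ hp, mem_image_of_mem _ hp⟩
      _ = #(T.image Prod.fst) * #(T.image Prod.snd) := card_product _ _
      _ ≤ Estar := hmax _ _ (isBiclique_onesAbove hM hW hd hE1 hβ0 hdβ hL)
  have hsplit := card_filter_add_card_filter_not (s := ones M)
    (fun p : Fin m × Fin n => β < u p.1 * v p.2)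
  calc (1 - β) ^ 2 * (E - Estar)
      ≤ (1 - β) ^ 2 * #((ones M).filter fun p => ¬ β < u p.1 * v p.2) := by
        gcongr
        rw [hE, sum_eq_card_ones hM, ← hsplit]
        push_cast
        have hT' : (#((ones M).filter fun p => β < u p.1 * v p.2) : ℝ) ≤ Estar := by
          exact_mod_cast hT
        linarith
    _ ≤ weightedLoss M W u v := one_sub_sq_mul_card_le_weightedLoss hW (by linarith) u v hβ1

lemma weightedLoss_indicator_of_isBiclique (hM : ∀ i j, M i j = 0 ∨ M i j = 1)
    (hW : ∀ i j, W i j = if M i j = 1 then 1 else d) {I : Finset (Fin m)} {J : Finset (Fin n)}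
    (hIJ : IsBiclique M I J) :
    weightedLoss M W (fun i => if i ∈ I then 1 else 0) (fun j => if j ∈ J then 1 else 0) =
      ∑ i, ∑ j, M i j - #I * #J := by
  have hterm : ∀ i j,
      W i j * (M i j - (if i ∈ I then 1 else 0) * (if j ∈ J then 1 else 0)) ^ 2
        = M i j - (if i ∈ I then 1 else 0) * (if j ∈ J then 1 else 0) := by
    intro i j
    by_cases hi : i ∈ I <;> by_cases hj : j ∈ J
    · simp [hW, hIJ i hi j hj, hi, hj]
    all_goals rcases hM i j with h | h <;> simp [hW, h, hi, hj]
  simp only [weightedLoss, hterm, sum_sub_distrib, ← sum_mul_sum, sum_boole]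
  simp

end Biclique

theorem stmt_9 {m n : ℕ} (M W : Matrix (Fin m) (Fin n) ℝ) (d : ℝ)
    (hM : ∀ i j, M i j = 0 ∨ M i j = 1)
    (hW : ∀ i j, W i j = if M i j = 1 then 1 else d)
    (E : ℝ) (hE : E = ∑ i, ∑ j, M i j) (hE1 : 1 ≤ E)
    (Estar : ℕ)
    (hEstar_ex : ∃ (I : Finset (Fin m)) (J : Finset (Fin n)),
      IsBiclique M I J ∧ I.card * J.card = Estar)
    (hEstar_max : ∀ (I : Finset (Fin m)) (J : Finset (Fin n)),
      IsBiclique M I J → I.card * J.card ≤ Estar)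
    (ε : ℝ) (hε0 : 0 < ε) (hε1 : ε ≤ 1) (hd : 2 ^ 6 * E ^ 6 / ε ^ 4 ≤ d) :
    E - Estar - ε <
        sInf {e : ℝ | ∃ (u : Fin m → ℝ) (v : Fin n → ℝ),
          e = ∑ i, ∑ j, W i j * (M i j - u i * v j) ^ 2} ∧
      sInf {e : ℝ | ∃ (u : Fin m → ℝ) (v : Fin n → ℝ),
          e = ∑ i, ∑ j, W i j * (M i j - u i * v j) ^ 2} ≤ E - Estar := by
  set S := {e : ℝ | ∃ (u : Fin m → ℝ) (v : Fin n → ℝ),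
    e = ∑ i, ∑ j, W i j * (M i j - u i * v j) ^ 2}
  set β := ε / (2 * E)
  have hE0 : 0 < E := by linarith
  have hβ0 : 0 < β := by positivity
  have hβ1 : β ≤ 1 := by rw [div_le_one (by positivity)]; linarith
  have hεβ : ε = 2 * E * β := (mul_div_cancel₀ ε (by positivity)).symm
  have hdβ : 4 * E ^ 2 ≤ d * β ^ 4 := by
    rw [div_le_iff₀ (by positivity), hεβ] at hd
    nlinarith [pow_pos hE0 4]
  have hlow : ∀ e ∈ S, (1 - β) ^ 2 * (E - Estar) ≤ e := by
    rintro _ ⟨u, v, rfl⟩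
    exact one_sub_sq_mul_le_weightedLoss hM hW hE hE1 hEstar_max hβ0.le hβ1 hdβ u v
  obtain ⟨I, J, hIJ, hcard⟩ := hEstar_ex
  have hmem : E - Estar ∈ S := ⟨_, _, by
    rw [← hcard, hE]
    push_cast
    exact (weightedLoss_indicator_of_isBiclique hM hW hIJ).symm⟩
  constructor
  · calc E - Estar - ε < (1 - β) ^ 2 * (E - Estar) := by
          have h2β : 0 ≤ 2 * β - β ^ 2 := by nlinarith
          rw [hεβ]
          nlinarith [mul_nonneg h2β (Nat.cast_nonneg (α := ℝ) Estar),
            mul_pos (pow_pos hβ0 2) hE0]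
      _ ≤ sInf S := le_csInf ⟨_, hmem⟩ hlow
  · exact csInf_le ⟨_, hlow⟩ hmem
end

section
/- For a binary matrix M ∈ {0,1}^{m×n}, the optimal value of the maximum-edge biclique program min over binary u ∈ {0,1}^m, v ∈ {0,1}^n with u_i v_j ≤ M_{ij} for all (i,j) of ‖M − uv^T‖_F² equals |E| − |E*|, where |E| = Σ_{ij} M_{ij} and |E*| is the maximum of |I|·|J| over pairs of sets I ⊆ {1,…,m}, J ⊆ {1,…,n} with M_{ij} = 1 for all i ∈ I, j ∈ J. -/
open Finset

theorem exists_eq_indicator_one {ι : Type*} [Fintype ι] {u : ι → ℝ}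
    (hu : ∀ i, u i = 0 ∨ u i = 1) : ∃ I : Finset ι, u = Set.indicator ↑I 1 := by
  refine ⟨univ.filter fun i => u i = 1, funext fun i => ?_⟩
  rcases hu i with h | h <;> simp [h]

variable {m n : ℕ} {M : Matrix (Fin m) (Fin n) ℝ}

theorem isBiclique_iff_indicator_mul_le (hM : ∀ i j, M i j = 0 ∨ M i j = 1)
    (I : Finset (Fin m)) (J : Finset (Fin n)) :
    IsBiclique M I J ↔
      ∀ i j, Set.indicator (↑I) 1 i * Set.indicator (↑J) 1 j ≤ M i j := by
  constructor
  · intro hIJ i j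
    have hnonneg : 0 ≤ M i j := by rcases hM i j with h | h <;> simp [h]
    simp only [Set.indicator_apply, Finset.mem_coe, Pi.one_apply]
    split_ifs with hi hj
    · simp [hIJ i hi j hj]
    all_goals simpa using hnonneg
  · intro hle i hi j hj
    have h := hle i j
    simp only [Set.indicator_apply, Finset.mem_coe, hi, hj, if_true, Pi.one_apply,
      mul_one] at h
    exact (hM i j).resolve_left fun h0 => by linarith

/-- On a biclique the rank-one approximation is exact, and elsewhere `M i j ^ 2 = M i j`,
so the squared error just counts the ones of `M` outside `I × J`. -/
theorem sum_sq_sub_indicator_mul (hM : ∀ i j, M i j = 0 ∨ M i j = 1)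
    {I : Finset (Fin m)} {J : Finset (Fin n)} (hIJ : IsBiclique M I J) :
    ∑ i, ∑ j, (M i j - Set.indicator (↑I) 1 i * Set.indicator (↑J) 1 j) ^ 2 =
      ∑ i, ∑ j, M i j - I.card * J.card := by
  have hterm : ∀ i j, (M i j - Set.indicator (↑I) 1 i * Set.indicator (↑J) 1 j) ^ 2 =
      M i j - Set.indicator (↑I) 1 i * Set.indicator (↑J) 1 j := by
    intro i j
    simp only [Set.indicator_apply, Finset.mem_coe, Pi.one_apply]
    split_ifs with hi hj
    · simp [hIJ i hi j hj]
    all_goals rcases hM i j with h | h <;> simp [h]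
  simp only [hterm, Finset.sum_sub_distrib, ← Finset.sum_mul_sum]
  simp [Set.indicator_apply]

theorem stmt_16 {m n : ℕ} (M : Matrix (Fin m) (Fin n) ℝ)
    (hM : ∀ i j, M i j = 0 ∨ M i j = 1)
    (E : ℝ) (hE : E = ∑ i, ∑ j, M i j)
    (Estar : ℕ)
    (hEstar_ex : ∃ (I : Finset (Fin m)) (J : Finset (Fin n)),
      IsBiclique M I J ∧ I.card * J.card = Estar)
    (hEstar_max : ∀ (I : Finset (Fin m)) (J : Finset (Fin n)),
      IsBiclique M I J → I.card * J.card ≤ Estar) :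
    IsLeast {x : ℝ | ∃ (u : Fin m → ℝ) (v : Fin n → ℝ),
        (∀ i, u i = 0 ∨ u i = 1) ∧ (∀ j, v j = 0 ∨ v j = 1) ∧
        (∀ i j, u i * v j ≤ M i j) ∧
        x = ∑ i, ∑ j, (M i j - u i * v j) ^ 2}
      (E - Estar) := by
  subst hE
  constructor
  · obtain ⟨I, J, hIJ, rfl⟩ := hEstar_ex
    refine ⟨Set.indicator (↑I) 1, Set.indicator (↑J) 1, Set.indicator_eq_zero_or_self _ 1,
      Set.indicator_eq_zero_or_self _ 1, (isBiclique_iff_indicator_mul_le hM I J).1 hIJ, ?_⟩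
    rw [sum_sq_sub_indicator_mul hM hIJ]
    push_cast; ring
  · rintro x ⟨u, v, hu, hv, huv, rfl⟩
    obtain ⟨I, rfl⟩ := exists_eq_indicator_one hu
    obtain ⟨J, rfl⟩ := exists_eq_indicator_one hv
    have hIJ := (isBiclique_iff_indicator_mul_le hM I J).2 huv
    have hcard : ((I.card * J.card : ℕ) : ℝ) ≤ Estar := by exact_mod_cast hEstar_max I J hIJ
    rw [sum_sq_sub_indicator_mul hM hIJ]
    push_cast at hcard
    linarith
end
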